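/- arXiv:2112.12405 — 6 statements merged into one kernel-verified Lean document; each statement's English description precedes it below -/
import Mathlib

section
/- Let R be a commutative ring equipped with a Poisson bracket and let I be a Poisson ideal of R (i.e. {r, x} ∈ I for all r ∈ R and x ∈ I). Then the radical √I of I is also a Poisson ideal of R. -/
/-!
Let `D` be a derivation with `D I ⊆ I` and `x ^ n ∈ I`. Differentiating
`x ^ (m + 1) * (D x) ^ (2 * j) ∈ I` and multiplying by `D x` gives
`(m + 1) * x ^ m * (D x) ^ (2 * j + 2)` plus a multiple of the original element; since `m + 1`
is invertible over `ℚ`, one power of `x` can be traded for two powers of `D x`.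
After `n` steps, `(D x) ^ (2 * n) ∈ I`. Each bracket `{r, -}` is such a derivation `D`.
-/

open Set

namespace Derivation

variable {A R : Type*} [CommRing A] [CommRing R] [Algebra A R] (D : Derivation A R R)

theorem map_pow_mul_self (a : R) (n : ℕ) : D (a ^ n) * a = n • (a ^ n * D a) := by
  rw [leibniz_pow]
  cases n with
  | zero => simp
  | succ n => simp only [smul_eq_mul, nsmul_eq_mul, add_tsub_cancel_right, pow_succ]; ring

variable [Algebra ℚ R] {I : Ideal R}

theorem pow_mul_map_pow_mem_of_pow_succ_mul (hI : MapsTo D I I) {x : R} {m j : ℕ}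
    (h : x ^ (m + 1) * D x ^ (2 * j) ∈ I) : x ^ m * D x ^ (2 * j + 2) ∈ I := by
  have hexpand : D (x ^ (m + 1) * D x ^ (2 * j)) * D x =
      ((m + 1 : ℕ) : R) * (x ^ m * D x ^ (2 * j + 2)) +
        ((2 * j : ℕ) : R) * D (D x) * (x ^ (m + 1) * D x ^ (2 * j)) := by
    have hpow := D.map_pow_mul_self (D x) (2 * j)
    simp only [leibniz, leibniz_pow, smul_eq_mul, nsmul_eq_mul, add_tsub_cancel_right] at hpow ⊢
    linear_combination x ^ (m + 1) * hpow
  have hunit : IsUnit ((m + 1 : ℕ) : R) := by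
    simpa using (Nat.cast_add_one_ne_zero (R := ℚ) m).isUnit.map (algebraMap ℚ R)
  rw [← I.unit_mul_mem_iff_mem hunit, eq_sub_of_add_eq hexpand.symm]
  exact I.sub_mem (I.mul_mem_right _ (hI h)) (I.mul_mem_left _ h)

theorem pow_mul_map_pow_mem_of_pow_mem (hI : MapsTo D I I) {x : R} {m j : ℕ}
    (h : x ^ (m + j) ∈ I) : x ^ m * D x ^ (2 * j) ∈ I := by
  induction j generalizing m with
  | zero => simpa using h
  | succ j ih =>
    exact D.pow_mul_map_pow_mem_of_pow_succ_mul hI (ih (by rwa [add_right_comm]))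

theorem mapsTo_radical (hI : MapsTo D I I) : MapsTo D I.radical I.radical := by
  rintro x ⟨n, hn⟩
  exact ⟨2 * n, by simpa using D.pow_mul_map_pow_mem_of_pow_mem hI (m := 0) (by simpa using hn)⟩

end Derivation

theorem radical_isPoisson_general {R : Type*} [CommRing R] [Algebra ℚ R]
    (br : R → R → R)
    (hadd_right : ∀ a b c : R, br a (b + c) = br a b + br a c)
    (hleibniz : ∀ a b c : R, br a (b * c) = b * br a c + c * br a b)
    (I : Ideal R)
    (hI : ∀ r x : R, x ∈ I → br r x ∈ I) :
    ∀ r x : R, x ∈ I.radical → br r x ∈ I.radical := fun r =>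
  (Derivation.mk' (AddMonoidHom.mk' (br r) (hadd_right r)).toIntLinearMap
    (hleibniz r)).mapsTo_radical (hI r)

/-- The radical of a Poisson ideal of a commutative Poisson algebra `R`
(in characteristic zero) is again a Poisson ideal. -/
theorem radical_isPoisson {R : Type*} [CommRing R] [Algebra ℚ R]
    (br : R → R → R)
    (hadd_left : ∀ a b c : R, br (a + b) c = br a c + br b c)
    (hadd_right : ∀ a b c : R, br a (b + c) = br a b + br a c)
    (hskew : ∀ a b : R, br a b = - br b a)
    (hjacobi : ∀ a b c : R, br a (br b c) + br b (br c a) + br c (br a b) = 0)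
    (hleibniz : ∀ a b c : R, br a (b * c) = b * br a c + c * br a b)
    (I : Ideal R)
    (hI : ∀ r x : R, x ∈ I → br r x ∈ I) :
    ∀ r x : R, x ∈ I.radical → br r x ∈ I.radical :=
  radical_isPoisson_general br hadd_right hleibniz I hI
end

section
/- Let R be a commutative noetherian ring with a Poisson bracket and let I be a Poisson ideal of R. Then every minimal prime ideal of R containing I is a Poisson ideal. -/
/-!
For a derivation `D` of a `ℚ`-algebra and a prime `p`, the ideal of all `a` with `Dⁿ a ∈ p` for
every `n` is again prime: if `i`, `j` are least with `Dⁱ a ∉ p` and `Dʲ b ∉ p`, then every term of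
the Leibniz expansion of `D^(i+j) (a b)` except `C(i+j, i) Dⁱ a Dʲ b` lies in `p`, and the binomial
coefficient is invertible. For `D = {r, ·}` and `p` minimal over the Poisson ideal `I`, this prime
lies between `I` and `p`, hence equals `p`, so `{r, p} ⊆ p`.
-/

open Finset

theorem Ideal.mem_of_nsmul_mem {A : Type*} [CommRing A] [Algebra ℚ A] (p : Ideal A) {n : ℕ}
    (hn : n ≠ 0) {x : A} (h : n • x ∈ p) : x ∈ p := by
  have := p.smul_of_tower_mem (n : ℚ)⁻¹ h
  rwa [← Nat.cast_smul_eq_nsmul ℚ, smul_smul, inv_mul_cancel₀ (Nat.cast_ne_zero.2 hn),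
    one_smul] at this

namespace Derivation

section

variable {R A : Type*} [CommSemiring R] [CommSemiring A] [Algebra R A] (D : Derivation R A A)

theorem iterate_apply_mul (n : ℕ) (a b : A) :
    D^[n] (a * b) = ∑ ij ∈ antidiagonal n, n.choose ij.1 • (D^[ij.1] a * D^[ij.2] b) := by
  induction n with
  | zero => simp
  | succ n ih =>
    rw [sum_antidiagonal_choose_succ_nsmul (M := A) (fun i j => D^[i] a * D^[j] b) n]
    simp only [Function.iterate_succ_apply', ih, map_sum, map_nsmul, leibniz, smul_eq_mul,
      smul_add, sum_add_distrib]
    refine congrArg _ (sum_congr rfl fun ij hij => ?_)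
    rw [n.choose_symm_of_eq_add (mem_antidiagonal.1 hij).symm, mul_comm]

/-- The largest `D`-stable ideal contained in `p`. -/
def core (p : Ideal A) : Ideal A where
  carrier := {a | ∀ n, D^[n] a ∈ p}
  zero_mem' n := by simp
  add_mem' ha hb n := by
    rw [iterate_map_add]
    exact add_mem (ha n) (hb n)
  smul_mem' c a ha n := by
    rw [smul_eq_mul, iterate_apply_mul]
    exact sum_mem fun ij _ => nsmul_mem (p.mul_mem_left _ (ha ij.2)) _

variable {D}

theorem mem_core {p : Ideal A} {a : A} : a ∈ D.core p ↔ ∀ n, D^[n] a ∈ p :=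
  Iff.rfl

theorem core_le (p : Ideal A) : D.core p ≤ p :=
  fun _ ha => ha 0

theorem le_core {I p : Ideal A} (hIp : I ≤ p) (hI : ∀ a ∈ I, D a ∈ I) : I ≤ D.core p := by
  intro a ha n
  refine hIp ?_
  induction n with
  | zero => exact ha
  | succ n ih => exact (Function.iterate_succ_apply' _ n a).symm ▸ hI _ ih

end

section

variable {R A : Type*} [CommSemiring R] [CommRing A] [Algebra R A] [Algebra ℚ A]
  {D : Derivation R A A}

theorem isPrime_core {p : Ideal A} (hp : p.IsPrime) : (D.core p).IsPrime := by
  refine Ideal.isPrime_iff.2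
    ⟨fun h => hp.ne_top (top_le_iff.1 (h ▸ core_le p)), fun {a b} hab => ?_⟩
  by_contra! ⟨ha, hb⟩
  simp only [mem_core, not_forall] at ha hb
  classical
  set i := Nat.find ha
  set j := Nat.find hb
  have hij : (i + j).choose i • (D^[i] a * D^[j] b) ∈ p := by
    have h := hab (i + j)
    have hmem : (i, j) ∈ antidiagonal (i + j) := HasAntidiagonal.mem_antidiagonal.2 rfl
    rw [iterate_apply_mul, ← add_sum_erase _ _ hmem] at h
    refine (p.add_mem_iff_left (sum_mem ?_)).1 h
    rintro ⟨k, l⟩ hkl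
    simp only [mem_erase, ne_eq, Prod.mk.injEq, HasAntidiagonal.mem_antidiagonal] at hkl
    refine nsmul_mem ?_ _
    rcases lt_or_gt_of_ne (show k ≠ i by omega) with hk | hk
    · exact p.mul_mem_right _ (not_not.1 (Nat.find_min ha hk))
    · exact p.mul_mem_left _ (not_not.1 (Nat.find_min hb (show l < j by omega)))
  have hchoose : (i + j).choose i ≠ 0 := (Nat.choose_pos (Nat.le_add_right i j)).ne'
  rcases hp.mem_or_mem (p.mem_of_nsmul_mem hchoose hij) with h | h
  · exact Nat.find_spec ha h
  · exact Nat.find_spec hb h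

end

end Derivation

theorem minimalPrime_isPoisson_general {R : Type*} [CommRing R] [Algebra ℚ R]
    (br : R → R → R)
    (hadd_right : ∀ a b c : R, br a (b + c) = br a b + br a c)
    (hleibniz : ∀ a b c : R, br a (b * c) = b * br a c + c * br a b)
    (I : Ideal R)
    (hI : ∀ r x : R, x ∈ I → br r x ∈ I) :
    ∀ p ∈ I.minimalPrimes, ∀ r x : R, x ∈ p → br r x ∈ p := by
  intro p hp r x hx
  let D : Derivation ℤ R R :=
    Derivation.mk' (AddMonoidHom.mk' (br r) (hadd_right r)).toIntLinearMap (hleibniz r)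
  have hcore : p ≤ D.core p :=
    hp.2 ⟨Derivation.isPrime_core hp.1.1, Derivation.le_core hp.1.2 (hI r)⟩ (Derivation.core_le p)
  exact Derivation.mem_core.1 (hcore hx) 1

/-- Every minimal prime over a Poisson ideal of a commutative noetherian
Poisson algebra (in characteristic zero) is a Poisson ideal. -/
theorem minimalPrime_isPoisson {R : Type*} [CommRing R] [IsNoetherianRing R] [Algebra ℚ R]
    (br : R → R → R)
    (hadd_left : ∀ a b c : R, br (a + b) c = br a c + br b c)
    (hadd_right : ∀ a b c : R, br a (b + c) = br a b + br a c)
    (hskew : ∀ a b : R, br a b = - br b a)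
    (hjacobi : ∀ a b c : R, br a (br b c) + br b (br c a) + br c (br a b) = 0)
    (hleibniz : ∀ a b c : R, br a (b * c) = b * br a c + c * br a b)
    (I : Ideal R)
    (hI : ∀ r x : R, x ∈ I → br r x ∈ I) :
    ∀ p ∈ I.minimalPrimes, ∀ r x : R, x ∈ p → br r x ∈ p :=
  minimalPrime_isPoisson_general br hadd_right hleibniz I hI
end

section
/- Let R be a commutative ℂ-algebra with a Poisson bracket, and let G be a finite group acting on R by ℂ-algebra automorphisms preserving the Poisson bracket ({g r, g r'} = g {r, r'}). Let I be the ideal of R generated by all elements g(r) − r for g ∈ G, r ∈ R. Then I^G := I ∩ R^G is a Poisson ideal of the Poisson algebra R^G of G-invariants. -/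
/-!
For an invariant `r`, the map `br r` is additive, satisfies the Leibniz rule and commutes with
the action, since `{r, g t} = {g r, g t} = g {r, t}`. Commuting with the action makes it send each
generator `g t - t` to the generator `g {r, t} - {r, t}`, and the Leibniz rule then propagates
this from the generators to the whole ideal they span.
-/

theorem Ideal.apply_mem_span_of_leibniz {R : Type*} [CommRing R] (D : R →+ R)
    (hD : ∀ b c, D (b * c) = b * D c + c * D b) {s : Set R}
    (hs : ∀ y ∈ s, D y ∈ Ideal.span s) {x : R} (hx : x ∈ Ideal.span s) :
    D x ∈ Ideal.span s := by
  induction hx using Submodule.span_induction with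
  | mem y hy => exact hs y hy
  | zero => simp
  | add a b _ _ ha hb => rw [map_add]; exact add_mem ha hb
  | smul a b hb hDb =>
    rw [smul_eq_mul, hD]
    exact add_mem (Ideal.mul_mem_left _ _ hDb) (Ideal.mul_mem_right _ _ hb)

theorem AddMonoidHom.apply_sub_mem_of_commute {R G : Type*} [AddCommGroup R] (D : R →+ R)
    (ρ : G → R → R) (hD : ∀ g t, D (ρ g t) = ρ g (D t)) {y : R}
    (hy : y ∈ {x : R | ∃ (g : G) (t : R), x = ρ g t - t}) :
    D y ∈ {x : R | ∃ (g : G) (t : R), x = ρ g t - t} := by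
  obtain ⟨g, t, rfl⟩ := hy
  exact ⟨g, D t, by rw [map_sub, hD]⟩

theorem invariant_ideal_isPoisson_general {R : Type*} [CommRing R] [Algebra ℂ R]
    (br : R → R → R)
    (hadd_right : ∀ a b c : R, br a (b + c) = br a b + br a c)
    (hleibniz : ∀ a b c : R, br a (b * c) = b * br a c + c * br a b)
    {G : Type*} [Group G] (ρ : G →* (R ≃ₐ[ℂ] R))
    (hequiv : ∀ (g : G) (a b : R), br (ρ g a) (ρ g b) = ρ g (br a b))
    (I : Ideal R) (hI : I = Ideal.span {x : R | ∃ (g : G) (r : R), x = ρ g r - r}) :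
    ∀ r x : R, (∀ g : G, ρ g r = r) → x ∈ I → (∀ g : G, ρ g x = x) →
      br r x ∈ I ∧ ∀ g : G, ρ g (br r x) = br r x := by
  intro r x hr hxI hxinv
  refine ⟨?_, fun g => by rw [← hequiv g, hr g, hxinv g]⟩
  let D : R →+ R := AddMonoidHom.mk' (br r) (hadd_right r)
  have hD_commute : ∀ g t, D (ρ g t) = ρ g (D t) := fun g t => by
    simp only [D, AddMonoidHom.mk'_apply]
    rw [← hequiv, hr]
  subst hI
  exact Ideal.apply_mem_span_of_leibniz D (hleibniz r)
    (fun y hy => Ideal.subset_span (D.apply_sub_mem_of_commute (fun g => ρ g) hD_commute hy)) hxI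

/-- Let `G` be a finite group acting on a commutative Poisson `ℂ`-algebra `R` by
algebra automorphisms preserving the Poisson bracket, and let `I` be the ideal
generated by the elements `g r - r`.  Then `I^G = I ∩ R^G` is a Poisson ideal of
the invariant algebra `R^G`: the bracket of an invariant element with an
invariant element of `I` again lies in `I` and is invariant. -/
theorem invariant_ideal_isPoisson {R : Type*} [CommRing R] [Algebra ℂ R]
    (br : R → R → R)
    (hadd_left : ∀ a b c : R, br (a + b) c = br a c + br b c)
    (hadd_right : ∀ a b c : R, br a (b + c) = br a b + br a c)
    (hskew : ∀ a b : R, br a b = - br b a)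
    (hjacobi : ∀ a b c : R, br a (br b c) + br b (br c a) + br c (br a b) = 0)
    (hleibniz : ∀ a b c : R, br a (b * c) = b * br a c + c * br a b)
    {G : Type*} [Group G] [Finite G] (ρ : G →* (R ≃ₐ[ℂ] R))
    (hequiv : ∀ (g : G) (a b : R), br (ρ g a) (ρ g b) = ρ g (br a b))
    (I : Ideal R) (hI : I = Ideal.span {x : R | ∃ (g : G) (r : R), x = ρ g r - r}) :
    ∀ r x : R, (∀ g : G, ρ g r = r) → x ∈ I → (∀ g : G, ρ g x = x) →
      br r x ∈ I ∧ ∀ g : G, ρ g (br r x) = br r x :=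
  invariant_ideal_isPoisson_general br hadd_right hleibniz ρ hequiv I hI
end

section
/- Let R be a commutative noetherian ℚ-algebra, G a finite group acting on R by ring automorphisms, and I a G-stable ideal of R. Let J be the ideal of R generated by I^G = I ∩ R^G. Then there exists a natural number m such that I^m ⊆ J. -/
/-!
Every `x ∈ I` is a root of the monic polynomial `∏ (X - g • x)` over the orbit of `x`, whose
non-leading coefficients lie in `I` (as all roots do) and are `G`-invariant, hence lie in `J`.
So `x ^ deg ∈ J`, i.e. `I ≤ √J`, and since `I` is finitely generated some power of it
lies in `J`.
-/

open Polynomial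

namespace Polynomial

variable {R : Type*}

theorem isWeaklyEisensteinAt_one [CommSemiring R] (𝓟 : Ideal R) :
    (1 : R[X]).IsWeaklyEisensteinAt 𝓟 :=
  ⟨fun hn => absurd hn (by simp)⟩

theorem isWeaklyEisensteinAt_prod [CommSemiring R] {𝓟 : Ideal R} {ι : Type*} (s : Finset ι)
    {f : ι → R[X]} (hf : ∀ i ∈ s, (f i).IsWeaklyEisensteinAt 𝓟) :
    (∏ i ∈ s, f i).IsWeaklyEisensteinAt 𝓟 :=
  Finset.prod_induction f (·.IsWeaklyEisensteinAt 𝓟) (fun _ _ => IsWeaklyEisensteinAt.mul)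
    (isWeaklyEisensteinAt_one 𝓟) hf

theorem isWeaklyEisensteinAt_X_sub_C [CommRing R] {𝓟 : Ideal R} {a : R} (ha : a ∈ 𝓟) :
    (X - C a).IsWeaklyEisensteinAt 𝓟 := by
  refine ⟨fun {n} hn => ?_⟩
  obtain rfl : n = 0 := by have := natDegree_X_sub_C_le (r := a); omega
  simpa using ha

end Polynomial

section Invariants

variable {G R : Type*} [Group G] [Fintype G] [CommRing R] [MulSemiringAction G R]
  {I : Ideal R}

theorem prodXSubSMul_isWeaklyEisensteinAt (hI : ∀ g : G, ∀ x ∈ I, g • x ∈ I) {x : R}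
    (hx : x ∈ I) : (prodXSubSMul G R x).IsWeaklyEisensteinAt I :=
  isWeaklyEisensteinAt_prod _ fun q _ => isWeaklyEisensteinAt_X_sub_C <| by
    induction q using QuotientGroup.induction_on with
    | H g => simpa only [MulAction.ofQuotientStabilizer_mk] using hI g x hx

theorem prodXSubSMul_isWeaklyEisensteinAt_span_invariants (hI : ∀ g : G, ∀ x ∈ I, g • x ∈ I)
    {x : R} (hx : x ∈ I) :
    (prodXSubSMul G R x).IsWeaklyEisensteinAt
      (Ideal.span {y : R | y ∈ I ∧ ∀ g : G, g • y = y}) :=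
  ⟨fun hn => Ideal.subset_span
    ⟨(prodXSubSMul_isWeaklyEisensteinAt hI hx).mem hn, fun g => prodXSubSMul.coeff G R x g _⟩⟩

theorem le_radical_span_invariants (hI : ∀ g : G, ∀ x ∈ I, g • x ∈ I) :
    I ≤ (Ideal.span {y : R | y ∈ I ∧ ∀ g : G, g • y = y}).radical := fun x hx =>
  ⟨_, IsWeaklyEisensteinAt.pow_natDegree_le_of_root_of_monic_mem
    (prodXSubSMul_isWeaklyEisensteinAt_span_invariants hI hx) (prodXSubSMul.eval G R x)
    (prodXSubSMul.monic G R x) _ le_rfl⟩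

end Invariants

theorem pow_le_span_invariants_general {R : Type*} [CommRing R] [IsNoetherianRing R]
    {G : Type*} [Group G] [Finite G] [MulSemiringAction G R]
    (I : Ideal R) (hI : ∀ g : G, ∀ x ∈ I, g • x ∈ I)
    (J : Ideal R) (hJ : J = Ideal.span {x : R | x ∈ I ∧ ∀ g : G, g • x = x}) :
    ∃ m : ℕ, I ^ m ≤ J := by
  have := Fintype.ofFinite G
  subst hJ
  exact Ideal.exists_pow_le_of_le_radical_of_fg (le_radical_span_invariants hI)
    (IsNoetherian.noetherian I)

/-- Let `R` be a commutative noetherian `ℚ`-algebra, `G` a finite group acting on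
`R` by ring automorphisms, `I` a `G`-stable ideal of `R` and `J` the ideal of `R`
generated by the `G`-invariant elements of `I`.  Then `I ^ m ⊆ J` for some `m`. -/
theorem pow_le_span_invariants {R : Type*} [CommRing R] [IsNoetherianRing R] [Algebra ℚ R]
    {G : Type*} [Group G] [Finite G] [MulSemiringAction G R]
    (I : Ideal R) (hI : ∀ g : G, ∀ x ∈ I, g • x ∈ I)
    (J : Ideal R) (hJ : J = Ideal.span {x : R | x ∈ I ∧ ∀ g : G, g • x = x}) :
    ∃ m : ℕ, I ^ m ≤ J :=
  pow_le_span_invariants_general I hI J hJ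
end

section
/- Let R be a commutative ring containing ℚ, G a finite group acting on R by ring automorphisms, I a G-stable ideal of R, and J the ideal of R generated by I^G = I ∩ R^G. Then for every natural number j, the G-invariants of J^j equal the j-th power of I^G viewed inside R^G: (J^j)^G = (I^G)^j (as ideals of R^G, where (I^G)^j denotes the ideal of R^G generated by products of j elements of I^G). -/
/-! Since `|G|` is invertible, the Reynolds operator `r ↦ |G|⁻¹ ∑ g • r` is an `R^G`-linear
retraction of `R` onto `R^G`. Applying it to a relation `x = ∑ bᵢ aᵢ` with `x, aᵢ ∈ R^G` gives
`x = ∑ ρ(bᵢ) aᵢ`, so contracting the extension of any ideal of `R^G` returns that ideal. As `J`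
is the extension of `I^G` and extension commutes with powers, `(J^j)^G` is the contraction of
the extension of `(I^G)^j`. -/

open Finset

theorem Ideal.comap_map_eq_self_of_retraction {A B : Type*} [CommRing A] [CommRing B]
    [Algebra A B] (ρ : B →ₗ[A] A) (hρ : ∀ a : A, ρ (algebraMap A B a) = a) (L : Ideal A) :
    (L.map (algebraMap A B)).comap (algebraMap A B) = L := by
  refine le_antisymm (fun a ha => ?_) le_comap_map
  have ha' : algebraMap A B a ∈ L • (⊤ : Submodule A B) := by
    rw [smul_top_eq_map]; exact ha
  rw [← hρ a]
  refine Submodule.smul_induction_on ha' (fun x hx b _ => ?_) (fun b c hb hc => ?_)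
  · rw [map_smul, smul_eq_mul]
    exact L.mul_mem_right _ hx
  · rw [map_add]
    exact L.add_mem hb hc

theorem Ideal.map_subtype_comap_subtype {R : Type*} [CommRing R] (S : Subring R) (I : Ideal R) :
    (I.comap S.subtype).map S.subtype = Ideal.span ((I : Set R) ∩ S) := by
  rw [Ideal.map, Ideal.coe_comap, Set.image_preimage_eq_inter_range, Subring.coe_subtype,
    Subtype.range_coe]

section Reynolds

variable {R G : Type*} [CommRing R] [Group G] [MulSemiringAction G R]

theorem smul_invOf_natCast (g : G) (n : ℕ) [Invertible (n : R)] : g • ⅟(n : R) = ⅟(n : R) := by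
  refine (invOf_eq_left_inv ?_).symm
  have hn : g • (n : R) = n := map_natCast (MulSemiringAction.toRingHom G R g) n
  calc g • ⅟(n : R) * n = g • (⅟(n : R) * n) := by rw [smul_mul', hn]
    _ = 1 := by rw [invOf_mul_self, smul_one]

variable [Fintype G]

theorem smul_sum_smul (g : G) (r : R) : g • ∑ h : G, h • r = ∑ h : G, h • r := by
  rw [smul_sum]
  simp_rw [smul_smul]
  exact Equiv.sum_comp (Equiv.mulLeft g) (· • r)

variable [Invertible (Fintype.card G : R)]

variable (R G) in
noncomputable def reynolds : R →ₗ[FixedPoints.subring R G] FixedPoints.subring R G where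
  toFun r := ⟨⅟(Fintype.card G : R) * ∑ g : G, g • r, fun g => by
    rw [smul_mul', smul_invOf_natCast, smul_sum_smul]⟩
  map_add' r s := by
    ext
    simp only [smul_add, sum_add_distrib, mul_add, Subring.coe_add]
  map_smul' s r := by
    ext
    have (g : G) : g • ((s : R) * r) = s * g • r := by rw [smul_mul', s.2 g]
    simp only [Subring.smul_def, smul_eq_mul, this, ← mul_sum, RingHom.id_apply, Subring.coe_mul]
    ring

theorem reynolds_algebraMap (s : FixedPoints.subring R G) :
    reynolds R G (algebraMap _ R s) = s := by
  ext
  change ⅟(Fintype.card G : R) * ∑ g : G, g • (s : R) = s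
  simp only [s.2 _, sum_const, card_univ, nsmul_eq_mul, invOf_mul_cancel_left]

end Reynolds

theorem invariants_of_pow_eq_pow_of_invariants_general {R : Type*} [CommRing R] [Algebra ℚ R]
    {G : Type*} [Group G] [Finite G] [MulSemiringAction G R]
    (I : Ideal R)
    (S : Subring R) (hS : ∀ x : R, x ∈ S ↔ ∀ g : G, g • x = x)
    (J : Ideal R) (hJ : J = Ideal.span {x : R | x ∈ I ∧ ∀ g : G, g • x = x}) :
    ∀ j : ℕ, (J ^ j).comap S.subtype = (I.comap S.subtype) ^ j := by
  intro j
  have hJ : J = (I.comap S.subtype).map S.subtype := by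
    rw [hJ, Ideal.map_subtype_comap_subtype]
    exact congr_arg Ideal.span (Set.ext fun x => and_congr_right' (hS x).symm)
  obtain rfl : S = FixedPoints.subring R G := Subring.ext hS
  have := Fintype.ofFinite G
  have : Invertible (Fintype.card G : ℚ) := invertibleOfNonzero (by simp)
  have := IsScalarTower.invertibleAlgebraCoeNat ℚ R (Fintype.card G)
  rw [hJ, ← Ideal.map_pow]
  exact Ideal.comap_map_eq_self_of_retraction (reynolds R G) reynolds_algebraMap _

/-- Let `R` be a commutative `ℚ`-algebra, `G` a finite group acting on `R` by ring
automorphisms, `I` a `G`-stable ideal, `S = R^G` the invariant subring, and `J` the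
ideal of `R` generated by `I^G = I ∩ R^G`.  Then for every `j`, the `G`-invariants of
`J ^ j` coincide with the `j`-th power of the ideal `I^G` of `R^G`. -/
theorem invariants_of_pow_eq_pow_of_invariants {R : Type*} [CommRing R] [Algebra ℚ R]
    {G : Type*} [Group G] [Finite G] [MulSemiringAction G R]
    (I : Ideal R) (hI : ∀ g : G, ∀ x ∈ I, g • x ∈ I)
    (S : Subring R) (hS : ∀ x : R, x ∈ S ↔ ∀ g : G, g • x = x)
    (J : Ideal R) (hJ : J = Ideal.span {x : R | x ∈ I ∧ ∀ g : G, g • x = x}) :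
    ∀ j : ℕ, (J ^ j).comap S.subtype = (I.comap S.subtype) ^ j :=
  invariants_of_pow_eq_pow_of_invariants_general I S hS J hJ
end

section
/- Let W be a finite subgroup of GL(V) and P a parabolic subgroup (stabilizer of a point). Then the pointwise stabilizer in W of the fixed subspace V^P equals P, and the setwise stabilizer of V^P equals the normalizer N_W(P). -/
/-!
The fixed set of `P = W_v` contains `v`, so anything fixing it pointwise lies in `W_v = P`.
Translating a set by `w` conjugates its pointwise stabilizer by `w`, and translating the fixed
set of `P` gives the fixed set of `w P w⁻¹`; hence `w` preserves `V^P` exactly when it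
normalizes `P`.
-/

open MulAction Pointwise

namespace MulAction

variable {G α : Type*} [Group G] [MulAction G α]

theorem fixedPoints_subgroup_eq_setOf (H : Subgroup G) :
    fixedPoints H α = {a | ∀ h ∈ H, h • a = a} :=
  Set.ext fun _ => Subtype.forall

theorem le_fixingSubgroup_fixedPoints (H : Subgroup G) :
    H ≤ fixingSubgroup G (fixedPoints H α) :=
  fun _ hh ⟨_, ha⟩ => ha ⟨_, hh⟩

theorem fixingSubgroup_fixedPoints_stabilizer (a : α) :
    fixingSubgroup G (fixedPoints (stabilizer G a) α) = stabilizer G a :=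
  le_antisymm (fun _ hg => hg ⟨a, fun h => h.2⟩) (le_fixingSubgroup_fixedPoints _)

theorem smul_fixedPoints_subgroup (g : G) (H : Subgroup G) :
    g • fixedPoints H α = fixedPoints (H.map (MulAut.conj g : G →* G)) α := by
  ext a
  simp only [fixedPoints_subgroup_eq_setOf, Set.mem_smul_set_iff_inv_smul_mem, Set.mem_ofPred_eq,
    Subgroup.mem_map, forall_exists_index, and_imp, forall_apply_eq_imp_iff₂]
  simp_rw [MonoidHom.coe_coe, MulAut.conj_apply, mul_smul, ← smul_eq_iff_eq_inv_smul g]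

theorem smul_fixedPoints_eq_self_iff_mem_normalizer {H : Subgroup G}
    (hH : fixingSubgroup G (fixedPoints H α) = H) (g : G) :
    g • fixedPoints H α = fixedPoints H α ↔ g ∈ Subgroup.normalizer (H : Set G) := by
  rw [Subgroup.mem_normalizer_iff_map_conj_eq]
  constructor
  · intro hg
    have := SubMulAction.fixingSubgroup_smul_eq_fixingSubgroup_map_conj (fixedPoints H α) g
    rwa [hg, hH, MulEquiv.toMonoidHom_eq_coe, eq_comm] at this
  · intro hg
    rw [smul_fixedPoints_subgroup, hg]

end MulAction

theorem stabilizers_of_fixed_subspace_general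
    {V : Type*} [AddCommGroup V]
    {W : Type*} [Group W] [DistribMulAction W V]
    (v : V) (P : Subgroup W) (hP : P = MulAction.stabilizer W v) :
    (∀ w : W, (∀ u : V, (∀ p ∈ P, p • u = u) → w • u = u) ↔ w ∈ P)
    ∧
    (∀ w : W, ((w • ·) '' {u : V | ∀ p ∈ P, p • u = u} = {u : V | ∀ p ∈ P, p • u = u}) ↔
        w ∈ Subgroup.normalizer (P : Set W)) := by
  have hclosed : fixingSubgroup W (fixedPoints P V) = P :=
    hP ▸ fixingSubgroup_fixedPoints_stabilizer v
  simp only [← fixedPoints_subgroup_eq_setOf, Set.image_smul]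
  refine ⟨fun w => ?_, smul_fixedPoints_eq_self_iff_mem_normalizer hclosed⟩
  rw [← SetLike.ext_iff.mp hclosed w, mem_fixingSubgroup_iff, fixedPoints_subgroup_eq_setOf]
  rfl

/-- Let `W` be a finite group acting linearly on a finite-dimensional complex vector
space `V` and let `P = W_v` be a parabolic subgroup.  Then the pointwise stabilizer in
`W` of the fixed subspace `V^P` equals `P`, and the setwise stabilizer of `V^P` equals
the normalizer `N_W(P)`. -/
theorem stabilizers_of_fixed_subspace
    {V : Type*} [AddCommGroup V] [Module ℂ V] [FiniteDimensional ℂ V]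
    {W : Type*} [Group W] [Finite W] [DistribMulAction W V] [SMulCommClass W ℂ V]
    (v : V) (P : Subgroup W) (hP : P = MulAction.stabilizer W v) :
    (∀ w : W, (∀ u : V, (∀ p ∈ P, p • u = u) → w • u = u) ↔ w ∈ P)
    ∧
    (∀ w : W, ((w • ·) '' {u : V | ∀ p ∈ P, p • u = u} = {u : V | ∀ p ∈ P, p • u = u}) ↔
        w ∈ Subgroup.normalizer (P : Set W)) :=
  stabilizers_of_fixed_subspace_general v P hP
end
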